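/- Let q, d, m', n be positive integers with 2 ≤ d ≤ q and n > d, and let δ ∈ (0,1). Set λ = √((2·q^d/m')·ln(2·q^d/δ)) and assume λ < 1 and m' ≥ ln(2n/δ)/((1−λ)·(−ln P_{q,d})). Let M' be an m'×n matrix with entries chosen independently and uniformly at random from [q] = {1,…,q}. Then with probability at least 1 − δ, for every column j ∈ {d+1,…,n} there exists a row i ∈ {1,…,m'} with M'_{i,j} ∉ {M'_{i,1},…,M'_{i,d}} (that is, the associated binary q-transversal test matrix is (n,{1,…,d})-disjunct). -/

import Mathlib

/-!
Split `M` into its first `d` columns `A` and the other columns `C`. Given `A`, a column of `C` is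
not separated when each of its entries lies among the `d` entries of the same row of `A`; for a
uniform column this has probability `∏ᵢ #(image Aᵢ) / q = exp (-∑ᵢ s Aᵢ)`, where
`s v = log (q / #(image v))` is the surprisal of the row pattern `v`, whose mean over `[q]^d` is
`-log P_{q,d}`. For the prefixes with `∑ᵢ s Aᵢ ≥ (1 - λ) m' 𝔼 s` the hypothesis on `m'` makes
this probability at most `δ / 2n`, so a union bound over the columns costs `δ / 2`. The other
prefixes form a fraction at most `δ / 2` by a Chernoff bound for the i.i.d. sum `∑ᵢ s Aᵢ`:
exponential moment with `t = λ / log q`, and the chord bound for `exp` on `[0, log q]`.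
-/

open scoped Classical

noncomputable section

/-- `Rqd q d i` is the number of strings in `[q]^d` containing exactly `i` distinct
symbols. -/
def Rqd (q d i : ℕ) : ℕ :=
  (Finset.univ.filter
    (fun v : Fin d → Fin q => (Finset.image v Finset.univ).card = i)).card

/-- `Pqd q d = (∏_{i=1}^d (i/q)^{R_{q,d,i}})^{1/q^d}`. -/
def Pqd (q d : ℕ) : ℝ :=
  (∏ i ∈ Finset.Icc 1 d, ((i : ℝ) / q) ^ Rqd q d i) ^ (((q : ℝ) ^ d)⁻¹)

open Finset Real
open scoped BigOperators

lemma exp_neg_le_one_sub_add_sq_div_two {x : ℝ} (hx : 0 ≤ x) :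
    exp (-x) ≤ 1 - x + x ^ 2 / 2 := by
  have hexp := quadratic_le_exp_of_nonneg hx
  rw [exp_neg, inv_le_iff_one_le_mul₀ (exp_pos x)]
  nlinarith [sq_nonneg x, sq_nonneg (x ^ 2)]

lemma exp_neg_mul_le_chord (lam : ℝ) {θ : ℝ} (h0 : 0 ≤ θ) (h1 : θ ≤ 1) :
    exp (-(lam * θ)) ≤ 1 - (1 - exp (-lam)) * θ := by
  have h := convexOn_exp.2 (Set.mem_univ (-lam)) (Set.mem_univ 0) h0 (sub_nonneg.2 h1)
    (add_sub_cancel θ 1)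
  simp only [smul_eq_mul, mul_zero, add_zero, exp_zero, mul_one] at h
  rw [mul_neg, mul_comm] at h
  linarith

section Chernoff

variable {ι V : Type*} [Fintype ι] [DecidableEq ι] [Fintype V]

lemma card_filter_sum_lt_le_exp_mul_sum_exp_pow (Y : V → ℝ) (B : ℝ) {t : ℝ} (ht : 0 ≤ t) :
    (#{a : ι → V | ∑ i, Y (a i) < B} : ℝ) ≤
      exp (t * B) * (∑ v, exp (-(t * Y v))) ^ Fintype.card ι := by
  calc (#{a : ι → V | ∑ i, Y (a i) < B} : ℝ)
      = ∑ a : ι → V, if ∑ i, Y (a i) < B then 1 else 0 := by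
        rw [Finset.card_filter]; push_cast; rfl
    _ ≤ ∑ a : ι → V, exp (t * (B - ∑ i, Y (a i))) := by
        gcongr with a
        split_ifs with h
        · exact one_le_exp (mul_nonneg ht (sub_nonneg.2 h.le))
        · exact (exp_pos _).le
    _ = exp (t * B) * ∑ a : ι → V, ∏ i, exp (-(t * Y (a i))) := by
        rw [mul_sum]
        refine sum_congr rfl fun a _ => ?_
        rw [← exp_sum, ← exp_add, sum_neg_distrib, ← mul_sum, mul_sub, sub_eq_add_neg]
    _ = exp (t * B) * (∑ v, exp (-(t * Y v))) ^ Fintype.card ι := by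
        rw [← Fintype.prod_sum fun (_ : ι) v => exp (-(t * Y v)), prod_const, card_univ]

lemma sum_exp_neg_le_card_mul_exp (Y : V → ℝ) {R : ℝ} (hR : 0 < R) (hY0 : ∀ v, 0 ≤ Y v)
    (hYR : ∀ v, Y v ≤ R) (lam : ℝ) :
    ∑ v, exp (-(lam / R * Y v)) ≤
      Fintype.card V * exp (-((1 - exp (-lam)) * (𝔼 v, Y v) / R)) := by
  set c := 1 - exp (-lam)
  calc ∑ v, exp (-(lam / R * Y v)) ≤ ∑ v, (1 - c * (Y v / R)) := by
        gcongr with v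
        rw [div_mul_comm, mul_comm]
        exact exp_neg_mul_le_chord lam (div_nonneg (hY0 v) hR.le) ((div_le_one hR).2 (hYR v))
    _ = Fintype.card V * (1 - c * (𝔼 v, Y v) / R) := by
        rw [sum_sub_distrib, ← mul_sum, ← sum_div, ← Fintype.card_mul_expect Y, sum_const,
          card_univ, nsmul_eq_mul, mul_one]
        ring
    _ ≤ Fintype.card V * exp (-(c * (𝔼 v, Y v) / R)) := by
        gcongr
        linarith [add_one_le_exp (-(c * (𝔼 v, Y v) / R))]

theorem card_filter_sum_lt_mul_expect_le (Y : V → ℝ) {R : ℝ} (hR : 0 < R)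
    (hY0 : ∀ v, 0 ≤ Y v) (hYR : ∀ v, Y v ≤ R) {lam : ℝ} (hlam : 0 ≤ lam) :
    (#{a : ι → V | ∑ i, Y (a i) < (1 - lam) * Fintype.card ι * 𝔼 v, Y v} : ℝ) ≤
      exp (-(Fintype.card ι * lam ^ 2 * (𝔼 v, Y v) / (2 * R))) *
        Fintype.card V ^ Fintype.card ι := by
  set μ := 𝔼 v, Y v
  have hμ : 0 ≤ μ := expect_nonneg fun v _ => hY0 v
  have hc : lam - lam ^ 2 / 2 ≤ 1 - exp (-lam) := by
    linarith [exp_neg_le_one_sub_add_sq_div_two hlam]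
  calc _ ≤ exp (lam / R * ((1 - lam) * Fintype.card ι * μ)) *
          (∑ v, exp (-(lam / R * Y v))) ^ Fintype.card ι :=
        card_filter_sum_lt_le_exp_mul_sum_exp_pow Y _ (div_nonneg hlam hR.le)
    _ ≤ exp (lam / R * ((1 - lam) * Fintype.card ι * μ)) *
          (Fintype.card V * exp (-((1 - exp (-lam)) * μ / R))) ^ Fintype.card ι := by
        gcongr
        exact sum_exp_neg_le_card_mul_exp Y hR hY0 hYR lam
    _ = exp (Fintype.card ι * μ / R * (lam * (1 - lam) - (1 - exp (-lam)))) *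
          Fintype.card V ^ Fintype.card ι := by
        rw [mul_pow, ← exp_nat_mul, mul_left_comm, ← exp_add, mul_comm]
        congr 2
        ring
    _ ≤ exp (Fintype.card ι * μ / R * -(lam ^ 2 / 2)) * Fintype.card V ^ Fintype.card ι := by
        gcongr
        linarith
    _ = _ := by
        congr 2
        ring

end Chernoff

section Counting

variable {ι κ α β : Type*} [Fintype ι] [Fintype κ] [Fintype α] [Fintype β]
  [DecidableEq ι] [DecidableEq κ] [DecidableEq α] [DecidableEq β]

lemma card_filter_apply_mem_mul_card (T : Finset β) (j : κ) :
    #{D : κ → β | D j ∈ T} * Fintype.card β = #T * Fintype.card β ^ Fintype.card κ := by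
  have hfiber : ∀ b ∈ T, #{D ∈ {D : κ → β | D j ∈ T} | D j = b} =
      Fintype.card β ^ (Fintype.card κ - 1) := by
    intro b hb
    have h := Fintype.card_filter_piFinset_const_eq_of_mem (ι := κ) univ j (mem_univ b)
    rw [Fintype.piFinset_univ, card_univ] at h
    rw [filter_filter, filter_congr fun D _ => and_iff_right_of_imp fun h : D j = b => h ▸ hb, h]
  rw [card_eq_sum_card_fiberwise (s := {D : κ → β | D j ∈ T}) (f := fun D => D j) (t := T)
      fun D hD => (mem_filter.1 hD).2, sum_congr rfl hfiber, sum_const,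
    smul_eq_mul, mul_assoc, pow_sub_one_mul (Fintype.card_pos_iff.2 ⟨j⟩).ne']

lemma card_filter_exists_forall_mem_mul_le (S : ι → Finset α) :
    #{C : ι → κ → α | ∃ j, ∀ i, C i j ∈ S i} * Fintype.card α ^ Fintype.card ι ≤
      Fintype.card κ * (∏ i, #(S i)) *
        Fintype.card α ^ (Fintype.card ι * Fintype.card κ) := by
  have htranspose : #{C : ι → κ → α | ∃ j, ∀ i, C i j ∈ S i} =
      #{D : κ → ι → α | ∃ j, D j ∈ Fintype.piFinset S} :=
    card_equiv (Equiv.piComm _) fun C => by simp [Equiv.piComm, Fintype.mem_piFinset]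
  have hunion : #{D : κ → ι → α | ∃ j, D j ∈ Fintype.piFinset S} ≤
      ∑ j, #{D : κ → ι → α | D j ∈ Fintype.piFinset S} :=
    (card_le_card fun D hD => by simpa using hD).trans card_biUnion_le
  calc _ ≤ (∑ j, #{D : κ → ι → α | D j ∈ Fintype.piFinset S}) *
          Fintype.card (ι → α) := by
        rw [htranspose, Fintype.card_fun]
        exact Nat.mul_le_mul_right _ hunion
    _ = _ := by
        rw [sum_mul, sum_congr rfl fun j _ => card_filter_apply_mem_mul_card _ j, sum_const,
          card_univ, smul_eq_mul, Fintype.card_piFinset, Fintype.card_fun, ← pow_mul, mul_assoc]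

end Counting

/-- The binary `q`-transversal test matrix of `M` is `(n, {1, …, d})`-disjunct. -/
abbrev SeparatesFirst {α : Type*} {m n : ℕ} (d : ℕ) (M : Fin m → Fin n → α) : Prop :=
  ∀ j : Fin n, d ≤ (j : ℕ) → ∃ i, ∀ k : Fin n, (k : ℕ) < d → M i j ≠ M i k

section Separation

variable {α : Type*} [DecidableEq α] {m d e : ℕ}

lemma separatesFirst_append_iff (A : Fin m → Fin d → α) (C : Fin m → Fin e → α) :
    SeparatesFirst d (fun i => Fin.append (A i) (C i)) ↔
      ∀ j, ∃ i, C i j ∉ univ.image (A i) := by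
  simp [Fin.forall_fin_add, eq_comm]

lemma card_filter_not_separatesFirst_eq_sum [Fintype α] :
    #{M : Fin m → Fin (d + e) → α | ¬ SeparatesFirst d M} =
      ∑ A : Fin m → Fin d → α,
        #{C : Fin m → Fin e → α | ∃ j, ∀ i, C i j ∈ univ.image (A i)} := by
  let φ : (Fin m → Fin d → α) × (Fin m → Fin e → α) ≃ (Fin m → Fin (d + e) → α) :=
    (Equiv.arrowProdEquivProdArrow _ _ _).symm.trans
      (Equiv.piCongrRight fun _ => Fin.appendEquiv d e)
  have hφ (x : (Fin m → Fin d → α) × (Fin m → Fin e → α)) :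
      (∃ j, ∀ i, x.2 i j ∈ univ.image (x.1 i)) ↔ ¬ SeparatesFirst d (φ x) :=
    Iff.trans (by simp) (separatesFirst_append_iff x.1 x.2).not.symm
  simp only [card_filter]
  rw [← Fintype.sum_equiv (M := ℕ) φ _ _ fun x => if_congr (hφ x) rfl rfl,
    Fintype.sum_prod_type]

lemma card_filter_not_separatesFirst_le [Fintype α] [Nonempty α]
    (L : Finset (Fin m → Fin d → α)) {ε : ℝ} (hε0 : 0 ≤ ε)
    (hε : ∀ A ∉ L, (∏ i, #(univ.image (A i)) : ℝ) ≤ ε * Fintype.card α ^ m) :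
    (#{M : Fin m → Fin (d + e) → α | ¬ SeparatesFirst d M} : ℝ) ≤
      (#L + e * ε * Fintype.card α ^ (m * d)) * Fintype.card α ^ (m * e) := by
  have hN : (0 : ℝ) < Fintype.card α := Nat.cast_pos.2 Fintype.card_pos
  have hcol (A : Fin m → Fin d → α) :
      (#{C : Fin m → Fin e → α | ∃ j, ∀ i, C i j ∈ univ.image (A i)} : ℝ) ≤
        (if A ∈ L then (Fintype.card α : ℝ) ^ (m * e) else 0) +
          e * ε * Fintype.card α ^ (m * e) := by
    have hrest : (0 : ℝ) ≤ e * ε * Fintype.card α ^ (m * e) := by positivity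
    split_ifs with hA
    · have h := card_le_univ {C : Fin m → Fin e → α | ∃ j, ∀ i, C i j ∈ univ.image (A i)}
      rw [Fintype.card_fun, Fintype.card_fun, Fintype.card_fin, Fintype.card_fin, ← pow_mul,
        mul_comm e m] at h
      have h' : (#{C : Fin m → Fin e → α | ∃ j, ∀ i, C i j ∈ univ.image (A i)} : ℝ) ≤
          (Fintype.card α : ℝ) ^ (m * e) := by exact_mod_cast h
      linarith
    · have h : #{C : Fin m → Fin e → α | ∃ j, ∀ i, C i j ∈ univ.image (A i)} *
          Fintype.card α ^ m ≤ e * (∏ i, #(univ.image (A i))) * Fintype.card α ^ (m * e) := by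
        convert card_filter_exists_forall_mem_mul_le (κ := Fin e) fun i => univ.image (A i)
          using 3 <;> simp
      have h' : (#{C : Fin m → Fin e → α | ∃ j, ∀ i, C i j ∈ univ.image (A i)} : ℝ) *
          Fintype.card α ^ m ≤ e * (ε * Fintype.card α ^ m) * Fintype.card α ^ (m * e) :=
        calc _ ≤ (e * (∏ i, #(univ.image (A i)) : ℝ)) * Fintype.card α ^ (m * e) := by
              exact_mod_cast h
          _ ≤ _ := by gcongr; exact hε A hA
      rw [zero_add]
      nlinarith [pow_pos hN m]
  rw [card_filter_not_separatesFirst_eq_sum]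
  push_cast
  calc _ ≤ ∑ A : Fin m → Fin d → α,
          ((if A ∈ L then (Fintype.card α : ℝ) ^ (m * e) else 0) +
            e * ε * Fintype.card α ^ (m * e)) := sum_le_sum fun A _ => hcol A
    _ = _ := by
        rw [sum_add_distrib, sum_ite_mem, univ_inter, sum_const, sum_const, card_univ,
          Fintype.card_fun, Fintype.card_fun, Fintype.card_fin, Fintype.card_fin]
        simp only [nsmul_eq_mul]
        push_cast
        ring

theorem one_sub_le_card_filter_separatesFirst_div [Fintype α] [Nonempty α]
    (L : Finset (Fin m → Fin d → α)) {δ : ℝ} (hδ : 0 ≤ δ)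
    (hL : (#L : ℝ) ≤ δ / 2 * Fintype.card α ^ (m * d))
    (hε : ∀ A ∉ L, (∏ i, #(univ.image (A i)) : ℝ) ≤
      δ / (2 * (d + e : ℕ)) * Fintype.card α ^ m) :
    (#{M : Fin m → Fin (d + e) → α | SeparatesFirst d M} : ℝ) /
      Fintype.card α ^ (m * (d + e)) ≥ 1 - δ := by
  have hbad := card_filter_not_separatesFirst_le (e := e) L (by positivity) hε
  have htotal := card_filter_add_card_filter_not (s := univ)
    fun M : Fin m → Fin (d + e) → α => SeparatesFirst d M
  rw [card_univ, Fintype.card_fun, Fintype.card_fun, Fintype.card_fin, Fintype.card_fin,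
    ← pow_mul, mul_comm (d + e)] at htotal
  have he : (e : ℝ) * (δ / (2 * (d + e : ℕ))) ≤ δ / 2 := by
    rcases eq_or_ne ((d + e : ℕ) : ℝ) 0 with h0 | h0
    · rw [h0, mul_zero, div_zero, mul_zero]; positivity
    · calc (e : ℝ) * (δ / (2 * (d + e : ℕ)))
          ≤ (d + e : ℕ) * (δ / (2 * (d + e : ℕ))) := by
            gcongr; exact_mod_cast Nat.le_add_left e d
        _ = δ / 2 := by field_simp
  have hbad' : (#{M : Fin m → Fin (d + e) → α | ¬ SeparatesFirst d M} : ℝ) ≤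
        δ * Fintype.card α ^ (m * (d + e)) :=
    calc _ ≤ _ := hbad
      _ ≤ (δ / 2 * Fintype.card α ^ (m * d) + δ / 2 * Fintype.card α ^ (m * d)) *
          Fintype.card α ^ (m * e) := by gcongr
      _ = _ := by rw [mul_add, pow_add]; ring
  have htotal' : (#{M : Fin m → Fin (d + e) → α | SeparatesFirst d M} : ℝ) +
      #{M : Fin m → Fin (d + e) → α | ¬ SeparatesFirst d M} =
      Fintype.card α ^ (m * (d + e)) := by exact_mod_cast htotal
  rw [ge_iff_le, le_div_iff₀ (pow_pos (Nat.cast_pos.2 Fintype.card_pos) _)]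
  linarith

end Separation

section Surprisal

variable {q d : ℕ}

def surprisal (v : Fin d → Fin q) : ℝ := log (q / #(univ.image v))

lemma one_le_card_image (hd : 0 < d) (v : Fin d → Fin q) : 1 ≤ #(univ.image v) :=
  card_pos.2 ((univ_nonempty_iff.2 ⟨⟨0, hd⟩⟩).image v)

lemma card_image_le_of_fin (v : Fin d → Fin q) : #(univ.image v) ≤ q :=
  (card_le_univ _).trans_eq (Fintype.card_fin q)

lemma surprisal_nonneg (hd : 0 < d) (v : Fin d → Fin q) : 0 ≤ surprisal v :=
  log_nonneg ((one_le_div (by exact_mod_cast one_le_card_image hd v)).2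
    (by exact_mod_cast card_image_le_of_fin v))

lemma surprisal_le_log (hd : 0 < d) (v : Fin d → Fin q) : surprisal v ≤ log q := by
  have hk : (1 : ℝ) ≤ #(univ.image v) := by exact_mod_cast one_le_card_image hd v
  have hq : (1 : ℝ) ≤ q := hk.trans (by exact_mod_cast card_image_le_of_fin v)
  exact log_le_log (by positivity) (div_le_self (Nat.cast_nonneg q) hk)

lemma card_image_eq_mul_exp_neg_surprisal (hd : 0 < d) (v : Fin d → Fin q) :
    (#(univ.image v) : ℝ) = q * exp (-surprisal v) := by
  have hk : (1 : ℝ) ≤ #(univ.image v) := by exact_mod_cast one_le_card_image hd v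
  have hq : (1 : ℝ) ≤ q := hk.trans (by exact_mod_cast card_image_le_of_fin v)
  rw [surprisal, exp_neg, exp_log (by positivity), inv_div, mul_div_cancel₀ _ (by positivity)]

lemma mul_log_le_sum_surprisal (hd : 0 < d) :
    q * log q ≤ ∑ v : Fin d → Fin q, surprisal v := by
  have hconst (s : Fin q) : surprisal (Function.const (Fin d) s) = log q := by
    have : Nonempty (Fin d) := ⟨⟨0, hd⟩⟩
    rw [surprisal, show univ.image (Function.const (Fin d) s) = {s} from
      image_const univ_nonempty s, card_singleton, Nat.cast_one, div_one]
  calc (q : ℝ) * log q = ∑ s : Fin q, surprisal (Function.const (Fin d) s) := by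
        simp [hconst]
    _ = ∑ v ∈ univ.image (Function.const (Fin d)), surprisal v :=
        (sum_image fun s _ t _ h => congrFun h ⟨0, hd⟩).symm
    _ ≤ ∑ v, surprisal v :=
        sum_le_sum_of_subset_of_nonneg (subset_univ _) fun v _ _ => surprisal_nonneg hd v

lemma expect_surprisal (hd : 0 < d) (hq : 0 < q) :
    𝔼 v : Fin d → Fin q, surprisal v = -log (Pqd q d) := by
  have hterm_pos : ∀ i ∈ Icc 1 d, (0 : ℝ) < ((i : ℝ) / q) ^ Rqd q d i := fun i hi => by
    have := (mem_Icc.1 hi).1; positivity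
  have hsum : ∑ i ∈ Icc 1 d, Rqd q d i * log ((i : ℝ) / q) =
      -∑ v : Fin d → Fin q, surprisal v := by
    have hmaps : ∀ v ∈ (univ : Finset (Fin d → Fin q)), #(univ.image v) ∈ Icc 1 d :=
      fun v _ => mem_Icc.2 ⟨one_le_card_image hd v, card_image_le.trans_eq (card_fin d)⟩
    calc ∑ i ∈ Icc 1 d, Rqd q d i * log ((i : ℝ) / q)
        = ∑ i ∈ Icc 1 d, ∑ v : Fin d → Fin q with #(univ.image v) = i,
            log ((#(univ.image v) : ℝ) / q) := by
          refine sum_congr rfl fun i _ => ?_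
          rw [sum_congr rfl fun v hv => by rw [(mem_filter.1 hv).2], sum_const, nsmul_eq_mul, Rqd]
      _ = -∑ v : Fin d → Fin q, surprisal v := by
          rw [sum_fiberwise_of_maps_to hmaps, ← sum_neg_distrib]
          simp only [surprisal, ← log_inv, inv_div]
  rw [Pqd, log_rpow (prod_pos hterm_pos), log_prod fun i hi => (hterm_pos i hi).ne',
    Fintype.expect_eq_sum_div_card]
  simp only [log_pow, hsum, Fintype.card_fun, Fintype.card_fin]
  push_cast
  ring

lemma mul_log_div_pow_le_expect_surprisal (hd : 0 < d) :
    q * log q / q ^ d ≤ 𝔼 v : Fin d → Fin q, surprisal v := by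
  rw [Fintype.expect_eq_sum_div_card, Fintype.card_fun, Fintype.card_fin, Fintype.card_fin]
  push_cast
  gcongr
  exact mul_log_le_sum_surprisal hd

lemma expect_surprisal_pos (hd : 0 < d) (hq : 2 ≤ q) :
    0 < 𝔼 v : Fin d → Fin q, surprisal v := by
  have := log_pos (show (1 : ℝ) < q by exact_mod_cast hq)
  exact (by positivity : (0 : ℝ) < q * log q / q ^ d).trans_le
    (mul_log_div_pow_le_expect_surprisal hd)

lemma prod_card_image_le_of_neg_log_le_sum (hd : 0 < d) {m : ℕ} (A : Fin m → Fin d → Fin q)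
    {ε : ℝ} (hε : 0 < ε) (hA : -log ε ≤ ∑ i, surprisal (A i)) :
    (∏ i, #(univ.image (A i)) : ℝ) ≤ ε * q ^ m :=
  calc (∏ i, #(univ.image (A i)) : ℝ) = exp (-∑ i, surprisal (A i)) * q ^ m := by
        simp_rw [card_image_eq_mul_exp_neg_surprisal hd, prod_mul_distrib, prod_const, card_univ,
          Fintype.card_fin, ← exp_sum, sum_neg_distrib, mul_comm]
    _ ≤ exp (log ε) * q ^ m := by gcongr; linarith
    _ = ε * q ^ m := by rw [exp_log hε]

lemma card_filter_sum_surprisal_lt_le (hd : 0 < d) (hq : 2 ≤ q) {m : ℕ} {δ lam : ℝ}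
    (hδ : 0 < δ) (hlam0 : 0 ≤ lam) (hlam : m * lam ^ 2 = 2 * q ^ d * log (2 * q ^ d / δ)) :
    (#{A : Fin m → Fin d → Fin q |
        ∑ i, surprisal (A i) < (1 - lam) * m * 𝔼 v : Fin d → Fin q, surprisal v} : ℝ) ≤
      δ / 2 * q ^ (m * d) := by
  have hR : 0 < log q := log_pos (by exact_mod_cast hq)
  have hqd : (1 : ℝ) ≤ q ^ d := one_le_pow₀ (by exact_mod_cast hq.trans' one_le_two)
  have hL : 0 ≤ log (2 * q ^ d / δ) := by
    nlinarith [sq_nonneg lam, (Nat.cast_nonneg m : (0 : ℝ) ≤ m)]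
  have hexponent : log (2 * q ^ d / δ) ≤
      m * lam ^ 2 * (𝔼 v : Fin d → Fin q, surprisal v) / (2 * log q) := by
    have hμ := mul_log_div_pow_le_expect_surprisal (q := q) hd
    have hq1 : (1 : ℝ) ≤ q := by exact_mod_cast hq.trans' one_le_two
    have hlog : log q ≤ q ^ d * 𝔼 v : Fin d → Fin q, surprisal v := by
      rw [div_le_iff₀' (by positivity)] at hμ
      nlinarith
    rw [hlam, le_div_iff₀ (by positivity)]
    nlinarith [mul_le_mul_of_nonneg_left hlog hL]
  have hchernoff := card_filter_sum_lt_mul_expect_le (ι := Fin m) surprisal hR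
    (surprisal_nonneg hd) (surprisal_le_log hd) hlam0
  simp only [Fintype.card_fin, Fintype.card_fun, Nat.cast_pow] at hchernoff
  refine hchernoff.trans ?_
  calc _ ≤ exp (-log (2 * q ^ d / δ)) * ((q : ℝ) ^ d) ^ m := by gcongr
    _ = δ / 2 * ((q : ℝ) ^ d) ^ m / q ^ d := by
        rw [exp_neg, exp_log (by positivity)]; field_simp
    _ ≤ δ / 2 * q ^ (m * d) := by
        rw [mul_comm m d, pow_mul]; exact div_le_self (by positivity) hqd

end Surprisal

theorem utd_upper_bound (q d m' n : ℕ) (hd2 : 2 ≤ d) (hdq : d ≤ q) (hm' : 1 ≤ m')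
    (hn : d < n) (δ : ℝ) (hδ : δ ∈ Set.Ioo (0 : ℝ) 1)
    (hlam : Real.sqrt ((2 * (q : ℝ) ^ d / m') * Real.log (2 * (q : ℝ) ^ d / δ)) < 1)
    (hm : (m' : ℝ) ≥ Real.log (2 * n / δ) /
      ((1 - Real.sqrt ((2 * (q : ℝ) ^ d / m') * Real.log (2 * (q : ℝ) ^ d / δ))) *
        (-Real.log (Pqd q d)))) :
    ((Finset.univ.filter (fun M : Fin m' → Fin n → Fin q =>
        ∀ j : Fin n, d ≤ (j : ℕ) →
          ∃ i : Fin m', ∀ k : Fin n, (k : ℕ) < d → M i j ≠ M i k)).card : ℝ) /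
      (q : ℝ) ^ (m' * n) ≥ 1 - δ := by
  obtain ⟨hδ0, hδ1⟩ := hδ
  obtain ⟨e, rfl⟩ := Nat.exists_eq_add_of_le hn.le
  have hd : 0 < d := by omega
  have hq : 2 ≤ q := hd2.trans hdq
  have : NeZero q := ⟨by omega⟩
  set lam := √((2 * (q : ℝ) ^ d / m') * log (2 * (q : ℝ) ^ d / δ))
  have hlam_sq : (m' : ℝ) * lam ^ 2 = 2 * q ^ d * log (2 * q ^ d / δ) := by
    have hqd : (1 : ℝ) ≤ q ^ d := one_le_pow₀ (by exact_mod_cast hq.trans' one_le_two)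
    have hL : 0 ≤ log (2 * (q : ℝ) ^ d / δ) := log_nonneg (by rw [le_div_iff₀ hδ0]; linarith)
    have hm'0 : (m' : ℝ) ≠ 0 := Nat.cast_ne_zero.2 (by omega)
    rw [sq_sqrt (by positivity)]
    field_simp
  rw [← expect_surprisal hd (by omega)] at hm
  have hsep : log (2 * (d + e : ℕ) / δ) ≤
      (1 - lam) * m' * 𝔼 v : Fin d → Fin q, surprisal v := by
    rw [ge_iff_le, div_le_iff₀ (mul_pos (by linarith) (expect_surprisal_pos hd hq))] at hm
    linarith
  have key := one_sub_le_card_filter_separatesFirst_div (e := e) (α := Fin q)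
    {A | ∑ i, surprisal (A i) < (1 - lam) * m' * 𝔼 v : Fin d → Fin q, surprisal v} hδ0.le
    (by simpa using card_filter_sum_surprisal_lt_le hd hq hδ0 (sqrt_nonneg _) hlam_sq)
    fun A hA => by
      simp only [mem_filter, mem_univ, true_and, not_lt] at hA
      rw [Fintype.card_fin]
      refine prod_card_image_le_of_neg_log_le_sum hd A (by positivity) ?_
      rw [← log_inv, inv_div]
      linarith
  simpa using key

end
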